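/- arXiv:1803.11155 — 8 statements merged into one kernel-verified Lean document; each statement's English description precedes it below -/
import Mathlib

section
/- Let A : ℝ → 𝔸 be differentiable at t₀ with derivative A' ∈ 𝔸. Then t ↦ exp(A(t)) is differentiable at t₀, with derivative equal to the interval (Bochner) integral ∫₀¹ exp((1−τ) • A(t₀)) · A' · exp(τ • A(t₀)) dτ. (The Duhamel-type integral representation d/dt exp(A(t)) = ∫₀¹ e^{(1−τ)A} (dA/dt) e^{τA} dτ established in the proof of the third identity of the Theorem of Appendix G.1.) -/
/-!
Since `d/dτ (exp((1-τ)x) exp(τy)) = exp((1-τ)x) (y-x) exp(τy)`, the fundamental theorem of calculus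
gives `exp y - exp x = D(x, y - x, y)` with `D(x, v, y) = ∫₀¹ exp((1-τ)x) v exp(τy) dτ`, which is
linear in `v`. Hence the difference quotient of `exp ∘ A` at `t₀` is `D(A t₀, slope A t₀ t, A t)`,
and the joint continuity of `D` lets it tend to `D(A t₀, A', A t₀)`.
-/

open NormedSpace Filter Topology

namespace NormedSpace

variable {𝔸 : Type*} [NormedRing 𝔸] [NormedAlgebra ℝ 𝔸] [CompleteSpace 𝔸]

noncomputable def duhamelIntegral (x v y : 𝔸) : 𝔸 :=
  ∫ τ in (0 : ℝ)..1, exp ((1 - τ) • x) * v * exp (τ • y)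

theorem hasDerivAt_exp_smul_mul_exp_smul (x y : 𝔸) (τ : ℝ) :
    HasDerivAt (fun τ : ℝ => exp ((1 - τ) • x) * exp (τ • y))
      (exp ((1 - τ) • x) * (y - x) * exp (τ • y)) τ := by
  have hleft : HasDerivAt (fun τ : ℝ => exp ((1 - τ) • x)) (-(exp ((1 - τ) • x) * x)) τ := by
    simpa [Function.comp_def] using
      (hasDerivAt_exp_smul_const x (1 - τ)).scomp τ ((hasDerivAt_id' τ).const_sub 1)
  refine (hleft.mul (hasDerivAt_exp_smul_const' y τ)).congr_deriv ?_
  noncomm_ring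

theorem exp_sub_exp_eq_duhamelIntegral (x y : 𝔸) :
    exp y - exp x = duhamelIntegral x (y - x) y := by
  -- `exp_continuous` is stated for `ℚ`-algebras.
  let : NormedAlgebra ℚ 𝔸 := .restrictScalars ℚ ℝ 𝔸
  have hcont : Continuous fun τ : ℝ => exp ((1 - τ) • x) * (y - x) * exp (τ • y) := by fun_prop
  rw [duhamelIntegral, intervalIntegral.integral_eq_sub_of_hasDerivAt
    (fun τ _ => hasDerivAt_exp_smul_mul_exp_smul x y τ) (hcont.intervalIntegrable 0 1)]
  simp

omit [CompleteSpace 𝔸] in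
theorem duhamelIntegral_smul (x v y : 𝔸) (c : ℝ) :
    duhamelIntegral x (c • v) y = c • duhamelIntegral x v y := by
  simp only [duhamelIntegral, mul_smul_comm, smul_mul_assoc, intervalIntegral.integral_smul]

theorem continuous_duhamelIntegral :
    Continuous fun p : 𝔸 × 𝔸 × 𝔸 => duhamelIntegral p.1 p.2.1 p.2.2 := by
  let : NormedAlgebra ℚ 𝔸 := .restrictScalars ℚ ℝ 𝔸
  exact intervalIntegral.continuous_parametric_intervalIntegral_of_continuous' (by fun_prop) 0 1

theorem slope_exp_comp_eq_duhamelIntegral (A : ℝ → 𝔸) (t₀ t : ℝ) :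
    slope (fun t => exp (A t)) t₀ t = duhamelIntegral (A t₀) (slope A t₀ t) (A t) := by
  rw [slope_def_module, slope_def_module, exp_sub_exp_eq_duhamelIntegral, duhamelIntegral_smul]

end NormedSpace

/-- **Duhamel-type integral formula from the proof of the third identity of the Theorem of
Appendix G.1.**  Let `𝔸` be a unital Banach algebra over `ℝ` and `A : ℝ → 𝔸` differentiable
at `t₀` with derivative `A'`.  Then `t ↦ exp(A t)` is differentiable at `t₀` with derivative
given by the interval (Bochner) integral
`∫₀¹ exp((1-τ) • A t₀) * A' * exp(τ • A t₀) dτ`. -/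
theorem hasDerivAt_exp_duhamel {𝔸 : Type*} [NormedRing 𝔸] [NormedAlgebra ℝ 𝔸]
    [CompleteSpace 𝔸] (A : ℝ → 𝔸) (A' : 𝔸) (t₀ : ℝ) (hA : HasDerivAt A A' t₀) :
    HasDerivAt (fun t => NormedSpace.exp (A t))
      (∫ τ in (0 : ℝ)..1,
        NormedSpace.exp ((1 - τ) • A t₀) * A' * NormedSpace.exp (τ • A t₀)) t₀ := by
  have hAt : Tendsto A (𝓝[≠] t₀) (𝓝 (A t₀)) := hA.continuousAt.tendsto.mono_left nhdsWithin_le_nhds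
  rw [hasDerivAt_iff_tendsto_slope] at hA ⊢
  have hlim := (continuous_duhamelIntegral.tendsto (A t₀, A', A t₀)).comp
    (tendsto_const_nhds.prodMk_nhds (hA.prodMk_nhds hAt))
  exact hlim.congr fun t => (slope_exp_comp_eq_duhamelIntegral A t₀ t).symm
end

section
/- For all A, B ∈ 𝔸 one has ∫₀¹ exp((1−τ) • A) · B · exp(τ • A) dτ = Σ_{n=0}^{∞} (1/(n+1)!) • ( Σ_{p=0}^{n} A^p · B · A^{n−p} ), where the series on the right converges absolutely in 𝔸. (The term-by-term power-series evaluation of the Duhamel integral carried out in the proof of the third identity of the Theorem of Appendix G.1.) -/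
/-!
Expanding both exponentials and taking the Cauchy product, the integrand is
`∑ₙ ∑_{k+l=n} (1-τ)^k τ^l • (A^k/k!) B (A^l/l!)`. For `τ ∈ [0, 1]` the `n`-th term is dominated
by `∑_{k+l=n} ‖A^k/k!‖ ‖B‖ ‖A^l/l!‖`, which is summable, so the series may be integrated term by
term. The Beta integral `∫₀¹ (1-τ)^k τ^l dτ = k! l! / (k+l+1)!` turns the `n`-th term into
`(n+1)!⁻¹ ∑_{k+l=n} A^k B A^l`.
-/

open scoped Nat
open Finset MeasureTheory

theorem integral_one_sub_pow_mul_pow (p q : ℕ) :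
    ∫ τ in (0 : ℝ)..1, (1 - τ) ^ p * τ ^ q = p ! * q ! / (p + q + 1)! := by
  have hβ := Complex.betaIntegral_eq_Gamma_mul_div (q + 1) (p + 1)
    (by exact_mod_cast q.succ_pos) (by exact_mod_cast p.succ_pos)
  have hsum : (q + 1 + (p + 1) : ℂ) = ((p + q + 1 : ℕ) : ℂ) + 1 := by push_cast; ring
  rw [hsum, Complex.Gamma_nat_eq_factorial, Complex.Gamma_nat_eq_factorial,
    Complex.Gamma_nat_eq_factorial, Complex.betaIntegral] at hβ
  have hcast : ((∫ τ in (0 : ℝ)..1, (1 - τ) ^ p * τ ^ q : ℝ) : ℂ)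
      = ∫ τ : ℝ in 0..1, (τ : ℂ) ^ ((q : ℂ) + 1 - 1) * (1 - (τ : ℂ)) ^ ((p : ℂ) + 1 - 1) := by
    rw [← intervalIntegral.integral_ofReal]
    refine intervalIntegral.integral_congr fun τ _ => ?_
    simp only [add_sub_cancel_right, Complex.cpow_natCast]
    push_cast
    ring
  apply Complex.ofReal_injective
  rw [hcast, hβ]
  push_cast
  ring

noncomputable section

variable {𝔸 : Type*} [NormedRing 𝔸] [NormedAlgebra ℝ 𝔸]

def expSandwichTerm (x B y : 𝔸) (n : ℕ) : 𝔸 :=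
  ∑ kl ∈ antidiagonal n, ((kl.1 ! : ℝ)⁻¹ • x ^ kl.1) * B * ((kl.2 ! : ℝ)⁻¹ • y ^ kl.2)

def expSandwichBound (A B : 𝔸) (n : ℕ) : ℝ :=
  ∑ kl ∈ antidiagonal n, ‖(kl.1 ! : ℝ)⁻¹ • A ^ kl.1‖ * ‖B‖ * ‖(kl.2 ! : ℝ)⁻¹ • A ^ kl.2‖

theorem hasSum_expSandwichTerm [CompleteSpace 𝔸] (x B y : 𝔸) :
    HasSum (expSandwichTerm x B y) (NormedSpace.exp x * B * NormedSpace.exp y) := by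
  have hx := NormedSpace.norm_expSeries_summable' (𝕂 := ℝ) x
  have hy := NormedSpace.norm_expSeries_summable' (𝕂 := ℝ) y
  have hxB : Summable fun k => ‖((k ! : ℝ)⁻¹ • x ^ k) * B‖ :=
    (hx.mul_right ‖B‖).of_nonneg_of_le (fun _ => norm_nonneg _) fun _ => norm_mul_le _ _
  rw [NormedSpace.exp_eq_tsum ℝ, ← hx.of_norm.tsum_mul_right,
    tsum_mul_tsum_eq_tsum_sum_antidiagonal_of_summable_norm hxB hy]
  exact (summable_norm_sum_mul_antidiagonal_of_summable_norm hxB hy).of_norm.hasSum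

theorem summable_expSandwichBound (A B : 𝔸) : Summable (expSandwichBound A B) := by
  set a : ℕ → ℝ := fun k => ‖(k ! : ℝ)⁻¹ • A ^ k‖
  have ha : Summable a := NormedSpace.norm_expSeries_summable' A
  exact summable_sum_mul_antidiagonal_of_summable_mul (f := fun k => a k * ‖B‖) (g := a)
    ((ha.mul_right ‖B‖).mul_of_nonneg ha (fun _ => by positivity) fun _ => norm_nonneg _)

theorem norm_inv_factorial_smul_smul_pow_le {s : ℝ} (hs : |s| ≤ 1) (A : 𝔸) (k : ℕ) :
    ‖(k ! : ℝ)⁻¹ • (s • A) ^ k‖ ≤ ‖(k ! : ℝ)⁻¹ • A ^ k‖ := by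
  rw [smul_pow, smul_comm, norm_smul, norm_pow, Real.norm_eq_abs]
  exact mul_le_of_le_one_left (norm_nonneg _) (pow_le_one₀ (abs_nonneg s) hs)

theorem norm_expSandwichTerm_smul_le {s t : ℝ} (hs : |s| ≤ 1) (ht : |t| ≤ 1) (A B : 𝔸)
    (n : ℕ) : ‖expSandwichTerm (s • A) B (t • A) n‖ ≤ expSandwichBound A B n := by
  refine (norm_sum_le _ _).trans (sum_le_sum fun kl _ => norm_mul₃_le.trans ?_)
  gcongr
  exacts [norm_inv_factorial_smul_smul_pow_le hs A _, norm_inv_factorial_smul_smul_pow_le ht A _]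

theorem norm_expSandwichTerm_le_of_mem_uIoc (A B : 𝔸) (n : ℕ) :
    ∀ τ ∈ Set.uIoc (0 : ℝ) 1,
      ‖expSandwichTerm ((1 - τ) • A) B (τ • A) n‖ ≤ expSandwichBound A B n := by
  intro τ hτ
  rw [Set.uIoc_of_le zero_le_one] at hτ
  exact norm_expSandwichTerm_smul_le (abs_le.2 ⟨by linarith [hτ.2], by linarith [hτ.1]⟩)
    (abs_le.2 ⟨by linarith [hτ.1], hτ.2⟩) A B n

theorem expSandwichTerm_smul (s t : ℝ) (A B : 𝔸) (n : ℕ) :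
    expSandwichTerm (s • A) B (t • A) n = ∑ kl ∈ antidiagonal n,
      (s ^ kl.1 * t ^ kl.2) • (((kl.1 ! : ℝ)⁻¹ • A ^ kl.1) * B * ((kl.2 ! : ℝ)⁻¹ • A ^ kl.2)) := by
  refine sum_congr rfl fun kl _ => ?_
  simp only [smul_pow, smul_comm _ (s ^ kl.1), smul_comm _ (t ^ kl.2), smul_mul_assoc,
    mul_smul_comm, smul_smul]
  congr 1
  ring

theorem integral_expSandwichTerm [CompleteSpace 𝔸] (A B : 𝔸) (n : ℕ) :
    ∫ τ in (0 : ℝ)..1, expSandwichTerm ((1 - τ) • A) B (τ • A) n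
      = ((n + 1)! : ℝ)⁻¹ • ∑ p ∈ range (n + 1), A ^ p * B * A ^ (n - p) := by
  simp_rw [expSandwichTerm_smul]
  rw [intervalIntegral.integral_finsetSum
      fun kl _ => (by fun_prop : Continuous _).intervalIntegrable _ _,
    smul_sum, ← Nat.sum_antidiagonal_eq_sum_range_succ
      fun k l => ((n + 1)! : ℝ)⁻¹ • (A ^ k * B * A ^ l)]
  refine sum_congr rfl fun kl hkl => ?_
  rw [HasAntidiagonal.mem_antidiagonal] at hkl
  rw [intervalIntegral.integral_smul_const, integral_one_sub_pow_mul_pow, hkl, smul_mul_assoc,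
    mul_smul_comm, smul_mul_assoc, smul_smul, smul_smul]
  congr 1
  field_simp

theorem hasSum_integral_expSandwichTerm [CompleteSpace 𝔸] (A B : 𝔸) :
    HasSum (fun n => ∫ τ in (0 : ℝ)..1, expSandwichTerm ((1 - τ) • A) B (τ • A) n)
      (∫ τ in (0 : ℝ)..1, NormedSpace.exp ((1 - τ) • A) * B * NormedSpace.exp (τ • A)) :=
  intervalIntegral.hasSum_integral_of_dominated_convergence (fun n _ => expSandwichBound A B n)
    (fun n => (by unfold expSandwichTerm; fun_prop : Continuous _).aestronglyMeasurable)
    (fun n => ae_of_all _ (norm_expSandwichTerm_le_of_mem_uIoc A B n))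
    (ae_of_all _ fun _ _ => summable_expSandwichBound A B) intervalIntegrable_const
    (ae_of_all _ fun _ _ => hasSum_expSandwichTerm _ _ _)

end

/-- **Term-by-term power-series evaluation of the Duhamel integral** (proof of the third
identity of the Theorem of Appendix G.1).  Let `𝔸` be a unital Banach algebra over `ℝ`.
For all `A, B ∈ 𝔸`, the series `∑_{n} (1/(n+1)!) • (∑_{p=0}^{n} A^p * B * A^(n-p))`
converges absolutely in `𝔸`, and
`∫₀¹ exp((1-τ) • A) * B * exp(τ • A) dτ = ∑_{n=0}^∞ (1/(n+1)!) • ∑_{p=0}^{n} A^p * B * A^(n-p)`. -/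
theorem duhamel_integral_eq_tsum {𝔸 : Type*} [NormedRing 𝔸] [NormedAlgebra ℝ 𝔸]
    [CompleteSpace 𝔸] (A B : 𝔸) :
    Summable (fun n : ℕ =>
        ‖(Nat.factorial (n + 1) : ℝ)⁻¹ • ∑ p ∈ Finset.range (n + 1), A ^ p * B * A ^ (n - p)‖) ∧
    (∫ τ in (0 : ℝ)..1, NormedSpace.exp ((1 - τ) • A) * B * NormedSpace.exp (τ • A))
      = ∑' n : ℕ,
          (Nat.factorial (n + 1) : ℝ)⁻¹ • ∑ p ∈ Finset.range (n + 1), A ^ p * B * A ^ (n - p) := by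
  have hterm := integral_expSandwichTerm A B
  have hsum := hasSum_integral_expSandwichTerm A B
  simp only [hterm] at hsum
  refine ⟨(summable_expSandwichBound A B).of_nonneg_of_le (fun _ => norm_nonneg _) fun n => ?_,
    hsum.tsum_eq.symm⟩
  rw [← hterm]
  simpa using intervalIntegral.norm_integral_le_of_norm_le_const
    (norm_expSandwichTerm_le_of_mem_uIoc A B n)
end

section
/- Let x, y ∈ L and set z := x + y + (1/2)•⁅x,y⁆ + (1/12)•⁅x−y,⁅x,y⁆⁆ − (1/24)•⁅y,⁅x,⁅x,y⁆⁆⁆. Then E(z) = E(x) ∘ E(y) in End_K(L); that is, the composition of the exponentiated adjoint actions of x and of y equals the exponentiated adjoint action of the single element z, whose expansion through the orders shown is exactly the Baker–Campbell–Hausdorff composite Λ^{(1⊕2)} = Λ^{(1)} + Λ^{(2)} + (1/2)(Λ^{(1)},Λ^{(2)}) + (1/12)(Λ^{(1)}−Λ^{(2)},(Λ^{(1)},Λ^{(2)})) − (1/24)(Λ^{(2)},(Λ^{(1)},(Λ^{(1)},Λ^{(2)}))) quoted in Appendix G.1 for the composition of two U(1)_T transformations. -/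
/-!
With `X = ad x` and `Y = ad y`, the nilpotency hypothesis says that every product of four
elements of the image of `ad` vanishes in `End L`; in particular the last summand of `z` is
central, and since `ad` is a Lie algebra map, `ad z = X + Y + ½[X,Y] + 1/12[X - Y,[X,Y]]`.
So it suffices to prove the BCH identity truncated at degree 3 in an associative algebra in
which all words of length four in `X` and `Y` vanish. There `Z` satisfies
`Z³ = (X + Y)³` and `Z⁴ = 0`, and the identity follows by expanding both sides and comparing
the coefficients of the words of length at most three.
-/

/-- The terminating exponential `E(w) := ∑_{k=0}^{4} (1/k!) • ad(w)^k ∈ End_K(L)` of the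
adjoint action of `w`; in a Lie algebra where all five-fold nested brackets vanish this is
the full exponential series. -/
noncomputable def expAd (K : Type*) {L : Type*} [Field K] [LieRing L] [LieAlgebra K L]
    (w : L) : Module.End K L :=
  ∑ k ∈ Finset.range 5, (Nat.factorial k : K)⁻¹ • (LieAlgebra.ad K L w) ^ k

open Finset Nat

section TruncExp

variable (K : Type*) {A : Type*} [Field K] [Ring A] [Algebra K A]

noncomputable def truncExp (a : A) : A :=
  ∑ k ∈ range 5, (k ! : K)⁻¹ • a ^ k

def bch (X Y : A) : A :=
  X + Y + (1 / 2 : K) • ⁅X, Y⁆ + (1 / 12 : K) • ⁅X - Y, ⁅X, Y⁆⁆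

variable {K} {s : Set A} {X Y : A}

theorem bch_pow_three (hs : ∀ a ∈ s, ∀ b ∈ s, ∀ c ∈ s, ∀ d ∈ s, a * b * c * d = 0)
    (hX : X ∈ s) (hY : Y ∈ s) : bch K X Y ^ 3 = (X + Y) ^ 3 := by
  simp only [bch, pow_succ, pow_zero, one_mul, Ring.lie_def, mul_add, add_mul, mul_sub, sub_mul,
    smul_mul_assoc, mul_smul_comm, smul_add, smul_sub, ← mul_assoc, hs, hX, hY, zero_mul,
    smul_zero, add_zero, sub_self]

theorem bch_pow_four (hs : ∀ a ∈ s, ∀ b ∈ s, ∀ c ∈ s, ∀ d ∈ s, a * b * c * d = 0)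
    (hX : X ∈ s) (hY : Y ∈ s) : bch K X Y ^ 4 = 0 := by
  rw [pow_succ, bch_pow_three hs hX hY]
  simp only [bch, pow_succ, pow_zero, one_mul, Ring.lie_def, mul_add, add_mul, mul_sub, sub_mul,
    mul_smul_comm, smul_sub, ← mul_assoc, hs, hX, hY, zero_mul, smul_zero, add_zero, sub_self]

theorem truncExp_bch [CharZero K] (hs : ∀ a ∈ s, ∀ b ∈ s, ∀ c ∈ s, ∀ d ∈ s, a * b * c * d = 0)
    (hX : X ∈ s) (hY : Y ∈ s) : truncExp K (bch K X Y) = truncExp K X * truncExp K Y := by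
  simp only [truncExp, sum_range_succ, sum_range_zero, zero_add, pow_zero, pow_one,
    bch_pow_three hs hX hY, bch_pow_four hs hX hY]
  simp only [bch, pow_succ, pow_zero, one_mul, Ring.lie_def, mul_add, add_mul, mul_sub, sub_mul,
    smul_mul_assoc, mul_smul_comm, smul_smul, smul_add, smul_sub, mul_one, ← mul_assoc, hs, hX,
    hY, zero_mul, smul_zero, add_zero]
  match_scalars <;> norm_num [factorial]

end TruncExp

section Lie

variable {K L : Type*} [Field K] [LieRing L] [LieAlgebra K L]

theorem mul_mul_mul_eq_zero_of_mem_range_ad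
    (hnil : ∀ a₁ a₂ a₃ a₄ a₅ : L, ⁅a₁, ⁅a₂, ⁅a₃, ⁅a₄, a₅⁆⁆⁆⁆ = 0) :
    ∀ a ∈ Set.range (LieAlgebra.ad K L), ∀ b ∈ Set.range (LieAlgebra.ad K L),
      ∀ c ∈ Set.range (LieAlgebra.ad K L), ∀ d ∈ Set.range (LieAlgebra.ad K L),
        a * b * c * d = 0 := by
  rintro _ ⟨a, rfl⟩ _ ⟨b, rfl⟩ _ ⟨c, rfl⟩ _ ⟨d, rfl⟩
  ext v
  exact hnil a b c d v

theorem ad_bch (hnil : ∀ a₁ a₂ a₃ a₄ a₅ : L, ⁅a₁, ⁅a₂, ⁅a₃, ⁅a₄, a₅⁆⁆⁆⁆ = 0) (x y : L) :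
    LieAlgebra.ad K L (x + y + (1 / 2 : K) • ⁅x, y⁆ + (1 / 12 : K) • ⁅x - y, ⁅x, y⁆⁆
        - (1 / 24 : K) • ⁅y, ⁅x, ⁅x, y⁆⁆⁆)
      = bch K (LieAlgebra.ad K L x) (LieAlgebra.ad K L y) := by
  have hcentral : LieAlgebra.ad K L ⁅y, ⁅x, ⁅x, y⁆⁆⁆ = 0 := by
    ext v
    rw [LieAlgebra.ad_apply, ← lie_skew, hnil, neg_zero, LinearMap.zero_apply]
  simp only [map_add, map_sub, map_smul, LieHom.map_lie, hcentral, smul_zero, sub_zero, bch]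

end Lie

/-- **Baker–Campbell–Hausdorff composition of two U(1)_T transformations (Appendix G.1).**
Let `K` be a field of characteristic zero and `L` a Lie algebra over `K` in which every
five-fold nested bracket vanishes.  For `x, y ∈ L` set
`z := x + y + (1/2)•⁅x,y⁆ + (1/12)•⁅x−y,⁅x,y⁆⁆ − (1/24)•⁅y,⁅x,⁅x,y⁆⁆⁆`.
Then `E(z) = E(x) ∘ E(y)`: the composite of the exponentiated adjoint actions of `x` and `y`
is the exponentiated adjoint action of the single BCH element `z`. -/
theorem expAd_bch {K : Type*} [Field K] [CharZero K] {L : Type*} [LieRing L] [LieAlgebra K L]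
    (hnil : ∀ a₁ a₂ a₃ a₄ a₅ : L, ⁅a₁, ⁅a₂, ⁅a₃, ⁅a₄, a₅⁆⁆⁆⁆ = 0) (x y : L) :
    expAd K (x + y + (1 / 2 : K) • ⁅x, y⁆ + (1 / 12 : K) • ⁅x - y, ⁅x, y⁆⁆
        - (1 / 24 : K) • ⁅y, ⁅x, ⁅x, y⁆⁆⁆)
      = expAd K x * expAd K y := by
  change truncExp K _ = truncExp K _ * truncExp K _
  rw [ad_bch hnil]
  exact truncExp_bch (mul_mul_mul_eq_zero_of_mem_range_ad hnil) ⟨x, rfl⟩ ⟨y, rfl⟩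
end

section
/- For all weights k, ℓ, m ∈ ℤ and all a, b, c ∈ A, the weighted thermal bracket satisfies: (i) antisymmetry, β(k,a;ℓ,b) = −β(ℓ,b;k,a); and (ii) the Jacobi identity with composite brackets carrying their natural weights, β(k,a; ℓ+m−1, β(ℓ,b;m,c)) + β(ℓ,b; m+k−1, β(m,c;k,a)) + β(m,c; k+ℓ−1, β(k,a;ℓ,b)) = 0. (Poisson-bracket axioms (i) and (ii) for the thermal bracket on k-adjoints, Appendix F.) -/
/-- The weighted thermal bracket of a `k`-adjoint `a` with an `ℓ`-adjoint `b`: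
`β(k,a;ℓ,b) := k•(a*(D b)) − ℓ•(b*(D a))`; it carries weight `k+ℓ−1` (Appendix F). -/
def wThermalBracket {A : Type*} [CommRing A] (D : A → A) (k : ℤ) (a : A) (l : ℤ) (b : A) : A :=
  k • (a * D b) - l • (b * D a)

/-- **Poisson-bracket axioms (i) and (ii) for the thermal bracket on k-adjoints
(Appendix F).**  Let `A` be a commutative ring and `D : A → A` a derivation.  Then for all
weights `k, ℓ, m ∈ ℤ` and all `a, b, c ∈ A`: (i) `β(k,a;ℓ,b) = -β(ℓ,b;k,a)`; and (ii) the
Jacobi identity holds with composite brackets carrying their natural weights,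
`β(k,a; ℓ+m−1, β(ℓ,b;m,c)) + β(ℓ,b; m+k−1, β(m,c;k,a)) + β(m,c; k+ℓ−1, β(k,a;ℓ,b)) = 0`. -/
theorem wThermalBracket_antisymm_jacobi {A : Type*} [CommRing A] (D : A → A)
    (hadd : ∀ a b : A, D (a + b) = D a + D b)
    (hleib : ∀ a b : A, D (a * b) = D a * b + a * D b) :
    (∀ (k l : ℤ) (a b : A), wThermalBracket D k a l b = -wThermalBracket D l b k a) ∧
    (∀ (k l m : ℤ) (a b c : A),
      wThermalBracket D k a (l + m - 1) (wThermalBracket D l b m c)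
        + wThermalBracket D l b (m + k - 1) (wThermalBracket D m c k a)
        + wThermalBracket D m c (k + l - 1) (wThermalBracket D k a l b) = 0) := by
  have Dhom : ∃ f : A →+ A, ∀ x, D x = f x := ⟨AddMonoidHom.mk' D hadd, fun _ => rfl⟩
  obtain ⟨f, hf⟩ := Dhom
  have hsub : ∀ x y : A, D (x - y) = D x - D y := by
    intro x y; simp [hf, map_sub]
  have hsmul : ∀ (n : ℤ) (x : A), D (n • x) = n • D x := by
    intro n x; rw [hf, hf, map_zsmul]
  constructor
  · intro k l a b
    simp only [wThermalBracket]
    ring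
  · intro k l m a b c
    simp only [wThermalBracket, hsub, hsmul, hleib]
    simp only [zsmul_eq_mul]
    push_cast
    ring
end

section
/- Suppose in addition W : A → A is a derivation (the adjoint-weight operator 𝔴_T) satisfying W∘D − D∘W = −D. If a is a k-adjoint and b an ℓ-adjoint in the sense that W(a) = k•a and W(b) = ℓ•b, then W(β(k,a;ℓ,b)) = (k+ℓ−1)•β(k,a;ℓ,b). That is, the thermal bracket of a k-adjoint with an ℓ-adjoint transforms as a (k+ℓ−1)-adjoint. -/
theorem AddMonoidHom.apply_map_eq_sub_one_smul_of_commutator_eq_neg {M : Type*} [AddCommGroup M]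
    (D W : M →+ M) (hWD : ∀ x, W (D x) - D (W x) = -D x) {k : ℤ} {x : M} (hx : W x = k • x) :
    W (D x) = (k - 1) • D x := by
  have h := hWD x
  rw [hx, map_zsmul] at h
  rw [sub_smul, one_smul, sub_eq_add_neg]
  exact sub_eq_iff_eq_add'.mp h

theorem apply_mul_eq_add_smul_of_leibniz {A : Type*} [Ring A] (W : A → A)
    (hWleib : ∀ x y : A, W (x * y) = W x * y + x * W y) {k l : ℤ} {x y : A}
    (hx : W x = k • x) (hy : W y = l • y) :
    W (x * y) = (k + l) • (x * y) := by
  rw [hWleib, hx, hy, smul_mul_assoc, mul_smul_comm, add_smul]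

theorem wThermalBracket_weight_general {A : Type*} [CommRing A] (D W : A → A)
    (hDadd : ∀ a b : A, D (a + b) = D a + D b)
    (hWadd : ∀ a b : A, W (a + b) = W a + W b)
    (hWleib : ∀ a b : A, W (a * b) = W a * b + a * W b)
    (hWD : ∀ a : A, W (D a) - D (W a) = -D a)
    (k l : ℤ) (a b : A) (ha : W a = k • a) (hb : W b = l • b) :
    W (wThermalBracket D k a l b) = (k + l - 1) • wThermalBracket D k a l b := by
  let W' := AddMonoidHom.mk' W hWadd
  have lower : ∀ {n : ℤ} {x : A}, W x = n • x → W (D x) = (n - 1) • D x :=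
    (AddMonoidHom.mk' D hDadd).apply_map_eq_sub_one_smul_of_commutator_eq_neg W' hWD
  have hab : W (a * D b) = (k + l - 1) • (a * D b) := by
    rw [apply_mul_eq_add_smul_of_leibniz W hWleib ha (lower hb)]; ring_nf
  have hba : W (b * D a) = (k + l - 1) • (b * D a) := by
    rw [apply_mul_eq_add_smul_of_leibniz W hWleib hb (lower ha)]; ring_nf
  rw [wThermalBracket, show W _ = W' _ from rfl, map_sub, map_zsmul, map_zsmul]
  change k • W _ - l • W _ = _
  rw [hab, hba, smul_sub, smul_comm k, smul_comm l]

/-- **The thermal bracket of a k-adjoint with an ℓ-adjoint is a (k+ℓ−1)-adjoint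
(Appendix F).**  Let `A` be a commutative ring, `D : A → A` a derivation, and `W : A → A` a
derivation (the adjoint-weight operator `𝔴_T`) satisfying `W∘D − D∘W = −D`.  If `W a = k•a`
and `W b = ℓ•b` (so `a` is a `k`-adjoint and `b` an `ℓ`-adjoint), then
`W(β(k,a;ℓ,b)) = (k+ℓ−1)•β(k,a;ℓ,b)`. -/
theorem wThermalBracket_weight {A : Type*} [CommRing A] (D W : A → A)
    (hDadd : ∀ a b : A, D (a + b) = D a + D b)
    (hDleib : ∀ a b : A, D (a * b) = D a * b + a * D b)
    (hWadd : ∀ a b : A, W (a + b) = W a + W b)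
    (hWleib : ∀ a b : A, W (a * b) = W a * b + a * W b)
    (hWD : ∀ a : A, W (D a) - D (W a) = -D a)
    (k l : ℤ) (a b : A) (ha : W a = k • a) (hb : W b = l • b) :
    W (wThermalBracket D k a l b) = (k + l - 1) • wThermalBracket D k a l b :=
  wThermalBracket_weight_general D W hDadd hWadd hWleib hWD k l a b ha hb
end

section
/- Let ∂ : A → A be a derivation commuting with D (∂∘D = D∘∂) and let g ∈ A be a (weight-1) component of the U(1)_T gauge potential. Define the U(1)_T covariant derivative of a k-adjoint a by 𝒟(k,a) := ∂a + g*(D a) − k•(a*(D g)), i.e., 𝒟(k,a) = ∂a + β(1,g;k,a). Then 𝒟 distributes over the weighted thermal bracket: for all k, ℓ ∈ ℤ and a, b ∈ A, 𝒟(k+ℓ−1, β(k,a;ℓ,b)) = β(k, 𝒟(k,a); ℓ, b) + β(k, a; ℓ, 𝒟(ℓ,b)). -/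
/-- The U(1)_T covariant derivative of a `k`-adjoint `a` built from a partial derivative
`∂`, a (weight-1) gauge-potential component `g`, and the thermal translation `D`:
`𝒟(k,a) := ∂a + g*(D a) − k•(a*(D g)) = ∂a + β(1,g;k,a)`. -/
def covDer {A : Type*} [CommRing A] (D del : A → A) (g : A) (k : ℤ) (a : A) : A :=
  del a + g * D a - k • (a * D g)

/-!
Write `𝒟(k,a) = ∂a + β(1,g;k,a)`. Since `∂` is a derivation commuting with `D`, it acts on
`β(k,a;ℓ,b)` by the Leibniz rule in each slot. The bracket with `g` acts the same way because the
weighted bracket satisfies the Jacobi identity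
`β(m,c;k+ℓ-1,β(k,a;ℓ,b)) = β(m+k-1,β(m,c;k,a);ℓ,b) + β(k,a;m+ℓ-1,β(m,c;ℓ,b))`, applied with `m = 1`.
Adding the two distributivity statements gives the theorem, by bilinearity of the bracket.
-/

namespace Derivation

variable {A : Type*} [CommRing A]

def ofLeibniz (D : A → A) (hadd : ∀ a b, D (a + b) = D a + D b)
    (hleib : ∀ a b, D (a * b) = D a * b + a * D b) : Derivation ℤ A A :=
  Derivation.mk' (AddMonoidHom.mk' D hadd).toIntLinearMap fun a b => by
    simp [hleib, mul_comm, add_comm]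

@[simp]
theorem coe_ofLeibniz (D : A → A) (hadd : ∀ a b, D (a + b) = D a + D b)
    (hleib : ∀ a b, D (a * b) = D a * b + a * D b) : ⇑(ofLeibniz D hadd hleib) = D :=
  rfl

end Derivation

section WeightedBracket

variable {A : Type*} [CommRing A] (D : Derivation ℤ A A)

theorem wThermalBracket_add_left (k : ℤ) (a a' : A) (l : ℤ) (b : A) :
    wThermalBracket D k (a + a') l b = wThermalBracket D k a l b + wThermalBracket D k a' l b := by
  simp only [wThermalBracket, map_add, zsmul_eq_mul]
  ring

theorem wThermalBracket_add_right (k : ℤ) (a : A) (l : ℤ) (b b' : A) :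
    wThermalBracket D k a l (b + b') = wThermalBracket D k a l b + wThermalBracket D k a l b' := by
  simp only [wThermalBracket, map_add, zsmul_eq_mul]
  ring

theorem wThermalBracket_jacobi (m : ℤ) (c : A) (k : ℤ) (a : A) (l : ℤ) (b : A) :
    wThermalBracket D m c (k + l - 1) (wThermalBracket D k a l b)
      = wThermalBracket D (m + k - 1) (wThermalBracket D m c k a) l b
        + wThermalBracket D k a (m + l - 1) (wThermalBracket D m c l b) := by
  simp only [wThermalBracket, map_sub, map_zsmul, Derivation.leibniz, smul_eq_mul]
  push_cast [zsmul_eq_mul]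
  ring

theorem map_wThermalBracket {δ : Derivation ℤ A A} (hcomm : ∀ a, δ (D a) = D (δ a))
    (k : ℤ) (a : A) (l : ℤ) (b : A) :
    δ (wThermalBracket D k a l b)
      = wThermalBracket D k (δ a) l b + wThermalBracket D k a l (δ b) := by
  simp only [wThermalBracket, map_sub, map_zsmul, Derivation.leibniz, smul_eq_mul, hcomm]
  simp only [zsmul_eq_mul]
  ring

theorem covDer_eq_add_wThermalBracket (δ : A → A) (g : A) (k : ℤ) (a : A) :
    covDer D δ g k a = δ a + wThermalBracket D 1 g k a := by
  rw [covDer, wThermalBracket, one_smul, add_sub_assoc]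

end WeightedBracket

/-- **The U(1)_T covariant derivative distributes over the weighted thermal bracket
(Appendix F).**  Let `A` be a commutative ring, `D : A → A` a derivation, `∂ : A → A` a
derivation commuting with `D`, and `g ∈ A` a (weight-1) component of the U(1)_T gauge
potential.  Then for all `k, ℓ ∈ ℤ` and `a, b ∈ A`,
`𝒟(k+ℓ−1, β(k,a;ℓ,b)) = β(k, 𝒟(k,a); ℓ, b) + β(k, a; ℓ, 𝒟(ℓ,b))`. -/
theorem covDer_wThermalBracket {A : Type*} [CommRing A] (D del : A → A) (g : A)
    (hDadd : ∀ a b : A, D (a + b) = D a + D b)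
    (hDleib : ∀ a b : A, D (a * b) = D a * b + a * D b)
    (hdadd : ∀ a b : A, del (a + b) = del a + del b)
    (hdleib : ∀ a b : A, del (a * b) = del a * b + a * del b)
    (hcomm : ∀ a : A, del (D a) = D (del a)) :
    ∀ (k l : ℤ) (a b : A),
      covDer D del g (k + l - 1) (wThermalBracket D k a l b)
        = wThermalBracket D k (covDer D del g k a) l b
          + wThermalBracket D k a l (covDer D del g l b) := by
  intro k l a b
  obtain ⟨D, rfl⟩ : ∃ D' : Derivation ℤ A A, ⇑D' = D :=
    ⟨.ofLeibniz D hDadd hDleib, Derivation.coe_ofLeibniz D hDadd hDleib⟩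
  obtain ⟨δ, rfl⟩ : ∃ δ : Derivation ℤ A A, ⇑δ = del :=
    ⟨.ofLeibniz del hdadd hdleib, Derivation.coe_ofLeibniz del hdadd hdleib⟩
  have hjacobi := wThermalBracket_jacobi D 1 g k a l b
  rw [add_sub_cancel_left, add_sub_cancel_left] at hjacobi
  simp only [covDer_eq_add_wThermalBracket, wThermalBracket_add_left, wThermalBracket_add_right,
    map_wThermalBracket D hcomm, hjacobi]
  abel
end

section
/- The six operators realize the SK-KMS (extended equivariant cohomology) superalgebra on A⁴: (1) 𝕕∘𝕕 = 0, 𝕕̄∘𝕕̄ = 0, 𝕕∘𝕕̄ + 𝕕̄∘𝕕 = 0; (2) 𝕕∘ῑ + ῑ∘𝕕 = −ℓ and 𝕕̄∘ι + ι∘𝕕̄ = −ℓ; (3) 𝕕∘ι + ι∘𝕕 = 0 and 𝕕̄∘ῑ + ῑ∘𝕕̄ = 0; (4) 𝕕∘ι₀ − ι₀∘𝕕 = −ι and 𝕕̄∘ι₀ − ι₀∘𝕕̄ = ῑ; (5) 𝕕∘ℓ = ℓ∘𝕕 and 𝕕̄∘ℓ = ℓ∘𝕕̄; (6) ι∘ι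 = 0, ῑ∘ῑ = 0, ι∘ῑ + ῑ∘ι = 0; (7) ℓ∘ι = ι∘ℓ, ℓ∘ῑ = ῑ∘ℓ, ℓ∘ι₀ = ι₀∘ℓ. Here anticommutators are taken between Grassmann-odd pairs and commutators otherwise, exactly reproducing the graded algebra of the Schwinger–Keldysh and KMS charges. -/
section SKKMS

variable {A : Type*} [CommRing A]

/-- The Schwinger–Keldysh supercharge `𝕕` on an adjoint supermultiplet
`𝔉 = (F, F_ψ, F_ψ̄, F̃)`: `𝕕 𝔉 = (F_ψ, 0, F̃, 0)`. -/
def opSK (F : A × A × A × A) : A × A × A × A :=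
  (F.2.1, 0, F.2.2.2, 0)

/-- The conjugate Schwinger–Keldysh supercharge `𝕕̄`: `𝕕̄ 𝔉 = (F_ψ̄, −F̃, 0, 0)`. -/
def opSKbar (F : A × A × A × A) : A × A × A × A :=
  (F.2.2.1, -F.2.2.2, 0, 0)

/-- The KMS interior contraction `ῑ`: `ῑ 𝔉 = (0, −D F, 0, −D F_ψ̄)`. -/
def opIotaBar (D : A → A) (F : A × A × A × A) : A × A × A × A :=
  (0, -D F.1, 0, -D F.2.2.1)

/-- The KMS interior contraction `ι`: `ι 𝔉 = (0, 0, −D F, D F_ψ)`. -/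
def opIota (D : A → A) (F : A × A × A × A) : A × A × A × A :=
  (0, 0, -D F.1, D F.2.1)

/-- The Grassmann-even KMS interior contraction `ι₀`: `ι₀ 𝔉 = (0, 0, 0, D F)`. -/
def opIotaZero (D : A → A) (F : A × A × A × A) : A × A × A × A :=
  (0, 0, 0, D F.1)

/-- The KMS Lie derivation `ℓ` (thermal translation acting componentwise):
`ℓ 𝔉 = (D F, D F_ψ, D F_ψ̄, D F̃)`. -/
def opLie (D : A → A) (F : A × A × A × A) : A × A × A × A :=
  (D F.1, D F.2.1, D F.2.2.1, D F.2.2.2)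

/-- **The SK-KMS (extended equivariant cohomology) superalgebra (Appendix A/D).**
Let `A` be a commutative ring and `D : A → A` a derivation.  The six operators
`𝕕, 𝕕̄, ῑ, ι, ι₀, ℓ` on quadruples `𝔉 ∈ A⁴` realize the graded algebra of the
Schwinger–Keldysh and KMS charges: (1) `𝕕² = 𝕕̄² = 0`, `{𝕕,𝕕̄} = 0`;
(2) `{𝕕,ῑ} = −ℓ`, `{𝕕̄,ι} = −ℓ`; (3) `{𝕕,ι} = 0`, `{𝕕̄,ῑ} = 0`;
(4) `[𝕕,ι₀] = −ι`, `[𝕕̄,ι₀] = ῑ`; (5) `[𝕕,ℓ] = 0 = [𝕕̄,ℓ]`;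
(6) `ι² = ῑ² = 0`, `{ι,ῑ} = 0`; (7) `[ℓ,ι] = [ℓ,ῑ] = [ℓ,ι₀] = 0`
(anticommutators between Grassmann-odd pairs, commutators otherwise). -/
theorem sk_kms_superalgebra (D : A → A)
    (hadd : ∀ a b : A, D (a + b) = D a + D b)
    (hleib : ∀ a b : A, D (a * b) = D a * b + a * D b) :
    ∀ F : A × A × A × A,
      (opSK (opSK F) = 0) ∧
      (opSKbar (opSKbar F) = 0) ∧
      (opSK (opSKbar F) + opSKbar (opSK F) = 0) ∧
      (opSK (opIotaBar D F) + opIotaBar D (opSK F) = -opLie D F) ∧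
      (opSKbar (opIota D F) + opIota D (opSKbar F) = -opLie D F) ∧
      (opSK (opIota D F) + opIota D (opSK F) = 0) ∧
      (opSKbar (opIotaBar D F) + opIotaBar D (opSKbar F) = 0) ∧
      (opSK (opIotaZero D F) - opIotaZero D (opSK F) = -opIota D F) ∧
      (opSKbar (opIotaZero D F) - opIotaZero D (opSKbar F) = opIotaBar D F) ∧
      (opSK (opLie D F) = opLie D (opSK F)) ∧
      (opSKbar (opLie D F) = opLie D (opSKbar F)) ∧
      (opIota D (opIota D F) = 0) ∧
      (opIotaBar D (opIotaBar D F) = 0) ∧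
      (opIota D (opIotaBar D F) + opIotaBar D (opIota D F) = 0) ∧
      (opLie D (opIota D F) = opIota D (opLie D F)) ∧
      (opLie D (opIotaBar D F) = opIotaBar D (opLie D F)) ∧
      (opLie D (opIotaZero D F) = opIotaZero D (opLie D F)) := by
  have h0 : D 0 = 0 := by
    have := hadd 0 0; simpa using this
  have hneg : ∀ a : A, D (-a) = -D a := by
    intro a
    have := hadd a (-a); simp [h0] at this
    linear_combination -this
  intro F
  refine ⟨?_,?_,?_,?_,?_,?_,?_,?_,?_,?_,?_,?_,?_,?_,?_,?_,?_⟩ <;>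
    simp [opSK, opSKbar, opIota, opIotaBar, opIotaZero, opLie, Prod.ext_iff,
      h0, hneg] <;> ring_nf <;> simp [hneg]

end SKKMS
end

section
/- For every quadruple 𝔉 ∈ A⁴ the Cartan supercharges square and anticommute into thermal-bracket gauge transformations along the projected super field strengths: (i) 𝒟_θ̄(𝒟_θ̄(𝔉)) = (𝓕_θ̄θ̄, 𝔉)_β; (ii) 𝒟_θ(𝒟_θ(𝔉)) = (𝓕_θθ, 𝔉)_β; (iii) 𝒟_θ(𝒟_θ̄(𝔉)) + 𝒟_θ̄(𝒟_θ(𝔉)) = (𝓕_θθ̄, 𝔉)_β. This is the component realization, in Wess–Zumino gauge, of the thermal equivariance (Cartan-model) algebra 𝒟_θ̄² = ℒ_{𝓕_θ̄θ̄}, 𝒟_θ² = ℒ_{𝓕_θθ}, {𝒟_θ, 𝒟_θ̄} = ℒ_{𝓕_θθ̄}. -/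
/-!
The thermal bracket `(x, y)_β = x D y - y D x` is the bracket of the vector fields `x D` and
`y D`, hence a Lie bracket on `A`. Componentwise the three identities need only its
bilinearity, except in the auxiliary-field component, where the commutator of the ghost actions
`(x, ·)_β` and `(y, ·)_β` has to be the action of `(x, y)_β`: that is the Jacobi identity.
-/

section Cartan

variable {A : Type*} [CommRing A]

/-- The U(1)_T thermal bracket `(x,y)_β := x*(D y) − y*(D x)`. -/
def tb (D : A → A) (x y : A) : A :=
  x * D y - y * D x

/-- The quadruple thermal bracket of two supermultiplets `𝔛 = (X, X_ψ, X_ψ̄, X̃)` and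
`𝔉 = (F, F_ψ, F_ψ̄, F̃)`:
`(𝔛,𝔉)_β := ((X,F)_β, (X,F_ψ)_β + (X_ψ,F)_β, (X,F_ψ̄)_β + (X_ψ̄,F)_β,
(X,F̃)_β + (X̃,F)_β + (X_ψ̄,F_ψ)_β − (X_ψ,F_ψ̄)_β)`. -/
def qtb (D : A → A) (X F : A × A × A × A) : A × A × A × A :=
  (tb D X.1 F.1,
   tb D X.1 F.2.1 + tb D X.2.1 F.1,
   tb D X.1 F.2.2.1 + tb D X.2.2.1 F.1,
   tb D X.1 F.2.2.2 + tb D X.2.2.2 F.1 + tb D X.2.2.1 F.2.1 - tb D X.2.1 F.2.2.1)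

/-- The Cartan supercharge `𝒟_θ̄` on a supermultiplet `𝔉 = (F, F_ψ, F_ψ̄, F̃)`, in
Wess–Zumino gauge with Vafa–Witten ghost quintet `(φ⁰, φ, φ̄, η, η̄)`:
`𝒟_θ̄ 𝔉 = (F_ψ, (φ,F)_β, F̃, (φ,F_ψ̄)_β − (η,F)_β)`. -/
def cartanDthetaBar (D : A → A) (φ η : A) (F : A × A × A × A) : A × A × A × A :=
  (F.2.1, tb D φ F.1, F.2.2.2, tb D φ F.2.2.1 - tb D η F.1)

/-- The Cartan supercharge `𝒟_θ`:
`𝒟_θ 𝔉 = (F_ψ̄, (φ⁰,F)_β − F̃, (φ̄,F)_β, (φ⁰,F_ψ̄)_β − (φ̄,F_ψ)_β + (η̄,F)_β)`. -/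
def cartanDtheta (D : A → A) (φ0 φbar ηbar : A) (F : A × A × A × A) : A × A × A × A :=
  (F.2.2.1, tb D φ0 F.1 - F.2.2.2, tb D φbar F.1,
   tb D φ0 F.2.2.1 - tb D φbar F.2.1 + tb D ηbar F.1)

section

variable {D : A → A} (hadd : ∀ a b : A, D (a + b) = D a + D b)
include hadd

theorem tb_zero_left (y : A) : tb D 0 y = 0 := by
  have hzero : D 0 = 0 := map_zero (AddMonoidHom.mk' D hadd)
  simp [tb, hzero]

theorem tb_neg_left (x y : A) : tb D (-x) y = -tb D x y := by
  have hneg : D (-x) = -D x := map_neg (AddMonoidHom.mk' D hadd) x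
  simp only [tb, hneg]
  ring

theorem tb_sub_right (x y z : A) : tb D x (y - z) = tb D x y - tb D x z := by
  have hsub : D (y - z) = D y - D z := map_sub (AddMonoidHom.mk' D hadd) y z
  simp only [tb, hsub]
  ring

theorem tb_leibniz (hleib : ∀ a b : A, D (a * b) = D a * b + a * D b) (x y z : A) :
    tb D x (tb D y z) = tb D (tb D x y) z + tb D y (tb D x z) := by
  have hsub (a b : A) : D (a - b) = D a - D b := map_sub (AddMonoidHom.mk' D hadd) a b
  simp only [tb, hsub, hleib]
  ring

theorem cartanDthetaBar_cartanDthetaBar (φ η : A) (F : A × A × A × A) :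
    cartanDthetaBar D φ η (cartanDthetaBar D φ η F) = qtb D (φ, 0, -η, 0) F := by
  simp only [cartanDthetaBar, qtb, tb_zero_left hadd, tb_neg_left hadd, add_zero, sub_zero,
    ← sub_eq_add_neg]

theorem cartanDtheta_cartanDtheta (hleib : ∀ a b : A, D (a * b) = D a * b + a * D b)
    (φ0 φbar ηbar : A) (F : A × A × A × A) :
    cartanDtheta D φ0 φbar ηbar (cartanDtheta D φ0 φbar ηbar F)
      = qtb D (φbar, -ηbar, 0, tb D φ0 φbar) F := by
  simp only [cartanDtheta, qtb, tb_zero_left hadd, tb_neg_left hadd, tb_sub_right hadd,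
    tb_leibniz hadd hleib φ0 φbar, Prod.mk.injEq, true_and]
  refine ⟨?_, ?_, ?_⟩ <;> abel

theorem cartanDtheta_cartanDthetaBar_add (hleib : ∀ a b : A, D (a * b) = D a * b + a * D b)
    (φ0 φ φbar η ηbar : A) (F : A × A × A × A) :
    cartanDtheta D φ0 φbar ηbar (cartanDthetaBar D φ η F)
        + cartanDthetaBar D φ η (cartanDtheta D φ0 φbar ηbar F)
      = qtb D (φ0, η, ηbar, tb D φ φbar) F := by
  simp only [cartanDtheta, cartanDthetaBar, qtb, tb_leibniz hadd hleib φ φbar,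
    Prod.mk_add_mk, Prod.mk.injEq]
  refine ⟨?_, ?_, ?_, ?_⟩ <;> abel

end

/-- **The thermal equivariance (Cartan-model) algebra in components (Appendix B/E):**
`𝒟_θ̄² = ℒ_{𝓕_θ̄θ̄}`, `𝒟_θ² = ℒ_{𝓕_θθ}`, `{𝒟_θ, 𝒟_θ̄} = ℒ_{𝓕_θθ̄}`.
Let `A` be a commutative ring, `D : A → A` a derivation, and `φ⁰, φ, φ̄, η, η̄ ∈ A` the
Vafa–Witten ghost quintet.  Then for every quadruple `𝔉 ∈ A⁴`:
(i) `𝒟_θ̄(𝒟_θ̄ 𝔉) = (𝓕_θ̄θ̄, 𝔉)_β` with `𝓕_θ̄θ̄ = (φ, 0, −η, 0)`;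
(ii) `𝒟_θ(𝒟_θ 𝔉) = (𝓕_θθ, 𝔉)_β` with `𝓕_θθ = (φ̄, −η̄, 0, (φ⁰,φ̄)_β)`;
(iii) `𝒟_θ(𝒟_θ̄ 𝔉) + 𝒟_θ̄(𝒟_θ 𝔉) = (𝓕_θθ̄, 𝔉)_β` with `𝓕_θθ̄ = (φ⁰, η, η̄, (φ,φ̄)_β)`. -/
theorem cartan_squares_to_field_strengths (D : A → A)
    (hadd : ∀ a b : A, D (a + b) = D a + D b)
    (hleib : ∀ a b : A, D (a * b) = D a * b + a * D b)
    (φ0 φ φbar η ηbar : A) :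
    ∀ F : A × A × A × A,
      (cartanDthetaBar D φ η (cartanDthetaBar D φ η F) = qtb D (φ, 0, -η, 0) F) ∧
      (cartanDtheta D φ0 φbar ηbar (cartanDtheta D φ0 φbar ηbar F)
        = qtb D (φbar, -ηbar, 0, tb D φ0 φbar) F) ∧
      (cartanDtheta D φ0 φbar ηbar (cartanDthetaBar D φ η F)
          + cartanDthetaBar D φ η (cartanDtheta D φ0 φbar ηbar F)
        = qtb D (φ0, η, ηbar, tb D φ φbar) F) := fun F =>
  ⟨cartanDthetaBar_cartanDthetaBar hadd φ η F,
    cartanDtheta_cartanDtheta hadd hleib φ0 φbar ηbar F,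
    cartanDtheta_cartanDthetaBar_add hadd hleib φ0 φ φbar η ηbar F⟩

end Cartan
end
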